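/- arXiv:1901.08244 — 2 statements merged into one kernel-verified Lean document; each statement's English description precedes it below -/
import Mathlib

section
/- Let C be a positive integer and let p ∈ ℝ^C be a vector whose entries sum to 1 (i.e., 𝟙ᵀp = 1, where 𝟙 ∈ ℝ^C is the all-ones vector). Then the C×C matrix identity (I − 𝟙pᵀ)ᵀ · diag(p) · (I − 𝟙pᵀ) = diag(p) − p pᵀ holds, where I is the C×C identity matrix and diag(p) is the diagonal matrix with the entries of p on its diagonal. -/
open Matrix

namespace Matrix

variable {n R : Type*} [Fintype n] [DecidableEq n]

theorem diagonal_mulVec_one [NonAssocSemiring R] (p : n → R) : diagonal p *ᵥ 1 = p := by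
  ext i
  simp [mulVec_diagonal]

theorem one_vecMul_diagonal [NonAssocSemiring R] (p : n → R) : 1 ᵥ* diagonal p = p := by
  ext i
  simp [vecMul_diagonal]

theorem transpose_one_sub_vecMulVec_mul_diagonal_mul [CommRing R] (p : n → R) :
    (1 - vecMulVec 1 p)ᵀ * diagonal p * (1 - vecMulVec 1 p) =
      diagonal p - (2 - ∑ i, p i) • vecMulVec p p := by
  have hleft : vecMulVec p 1 * diagonal p = vecMulVec p p := by
    rw [vecMulVec_mul, one_vecMul_diagonal]
  have hright : diagonal p * vecMulVec 1 p = vecMulVec p p := by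
    rw [mul_vecMulVec, diagonal_mulVec_one]
  have hboth : vecMulVec p p * vecMulVec 1 p = (∑ i, p i) • vecMulVec p p := by
    rw [vecMulVec_mul_vecMulVec, dotProduct_one, vecMulVec_smul]
  rw [transpose_sub, transpose_one, transpose_vecMulVec, sub_mul, one_mul, hleft, mul_sub,
    mul_one, sub_mul, hright, hboth, sub_smul]
  module

end Matrix

theorem factorization_of_softmax_hessian_general (C : ℕ) (p : Fin C → ℝ)
    (hp : ∑ j, p j = 1) :
    (1 - Matrix.vecMulVec (fun _ => (1 : ℝ)) p)ᵀ * Matrix.diagonal p *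
        (1 - Matrix.vecMulVec (fun _ => (1 : ℝ)) p) =
      Matrix.diagonal p - Matrix.vecMulVec p p := by
  refine (transpose_one_sub_vecMulVec_mul_diagonal_mul p).trans ?_
  rw [hp]
  norm_num

/-- Lemma 1 of the paper: for a vector `p ∈ ℝ^C` whose entries sum to 1,
`(I − 𝟙pᵀ)ᵀ · diag(p) · (I − 𝟙pᵀ) = diag(p) − p pᵀ`. -/
theorem factorization_of_softmax_hessian (C : ℕ) (hC : 0 < C) (p : Fin C → ℝ)
    (hp : ∑ j, p j = 1) :
    (1 - Matrix.vecMulVec (fun _ => (1 : ℝ)) p)ᵀ * Matrix.diagonal p *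
        (1 - Matrix.vecMulVec (fun _ => (1 : ℝ)) p) =
      Matrix.diagonal p - Matrix.vecMulVec p p :=
  factorization_of_softmax_hessian_general C p hp
end

section
/- Let C ≥ 2, m, p be positive integers and let δ_{i,c,c'} ∈ ℝ^p be given vectors for i ∈ {1,…,m}, c ∈ {1,…,C}, c' ∈ {1,…,C}. Define G = (1/(C·m)) Σ_c Σ_i Σ_{c'} δ_{i,c,c'} δ_{i,c,c'}ᵀ; group means δ_{c,c'} = (1/m) Σ_i δ_{i,c,c'}; group covariances Σ_{c,c'} = (1/m) Σ_i (δ_{i,c,c'} − δ_{c,c'})(δ_{i,c,c'} − δ_{c,c'})ᵀ; cluster centers δ_c = (1/(C−1)) Σ_{c'≠c} δ_{c,c'}; and cluster covariances Σ_c = (1/(C−1)) Σ_{c'≠c} (δ_{c,c'} − δ_c)(δ_{c,c'} − δ_c)ᵀ. Then G = G_0 + G_1 + G_2 + G_3, where G_0 = (1/C) Σ_c δ_{c,c} δ_{c,c}ᵀ, G_1 = ((C−1)/C) Σ_c δ_c δ_cᵀ, G_2 = ((C−1)/C) Σ_c Σ_c (i.e., (C−1)·Ave_c{Σ_c}), and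 G_3 = (1/C) Σ_c Σ_{c'} Σ_{c,c'}. -/
/-!
Both averaging steps are instances of one identity, the parallel-axis theorem: the mean of
the outer products `x xᵀ` over a finite family equals its covariance plus `μ μᵀ`, where `μ` is
the family's mean. Applied to the `m` samples of each group `(c, c')` it turns `G` into
`(1/C) Σ_c Σ_{c'} (Σ_{c,c'} + δ_{c,c'} δ_{c,c'}ᵀ)`; splitting off the diagonal group `c' = c`
and applying it again to the `C - 1` groups `c' ≠ c` of cluster `c` gives the rest.
-/

open Matrix Finset

namespace Matrix

variable {ι m n R K : Type*}

theorem sum_vecMulVec [NonUnitalNonAssocSemiring R] (s : Finset ι) (w : ι → m → R)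
    (v : n → R) : ∑ x ∈ s, vecMulVec (w x) v = vecMulVec (∑ x ∈ s, w x) v := by
  ext i j
  simp [vecMulVec_apply, Matrix.sum_apply, Finset.sum_apply, Finset.sum_mul]

theorem vecMulVec_sum [NonUnitalNonAssocSemiring R] (s : Finset ι) (w : m → R)
    (v : ι → n → R) : ∑ x ∈ s, vecMulVec w (v x) = vecMulVec w (∑ x ∈ s, v x) := by
  ext i j
  simp [vecMulVec_apply, Matrix.sum_apply, Finset.sum_apply, Finset.mul_sum]

theorem sum_vecMulVec_sub_of_sum_eq_card_nsmul [CommRing R] (s : Finset ι) (f : ι → n → R)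
    (μ : n → R) (hμ : ∑ x ∈ s, f x = #s • μ) :
    ∑ x ∈ s, vecMulVec (f x - μ) (f x - μ)
      = ∑ x ∈ s, vecMulVec (f x) (f x) - #s • vecMulVec μ μ := by
  simp only [sub_vecMulVec, vecMulVec_sub, sum_sub_distrib, sum_vecMulVec, vecMulVec_sum, hμ,
    sum_const, smul_vecMulVec, vecMulVec_smul]
  abel

theorem inv_card_smul_sum_vecMulVec_self [Field K] (s : Finset ι) (f : ι → n → K)
    (μ : n → K) (hμ : μ = (#s : K)⁻¹ • ∑ x ∈ s, f x)
    (S : Matrix n n K) (hS : S = (#s : K)⁻¹ • ∑ x ∈ s, vecMulVec (f x - μ) (f x - μ)) :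
    (#s : K)⁻¹ • ∑ x ∈ s, vecMulVec (f x) (f x) = S + vecMulVec μ μ := by
  rcases eq_or_ne (#s : K) 0 with hs | hs
  · simp [hμ, hS, hs]
  · have hsum : ∑ x ∈ s, f x = #s • μ := by
      rw [hμ, ← Nat.cast_smul_eq_nsmul K, smul_inv_smul₀ hs]
    rw [hS, sum_vecMulVec_sub_of_sum_eq_card_nsmul s f μ hsum, smul_sub,
      ← Nat.cast_smul_eq_nsmul K, inv_smul_smul₀ hs, sub_add_cancel]

theorem sum_vecMulVec_self_eq_card_smul [Field K] [CharZero K] (s : Finset ι)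
    (f : ι → n → K) (μ : n → K) (hμ : μ = (#s : K)⁻¹ • ∑ x ∈ s, f x)
    (S : Matrix n n K) (hS : S = (#s : K)⁻¹ • ∑ x ∈ s, vecMulVec (f x - μ) (f x - μ)) :
    ∑ x ∈ s, vecMulVec (f x) (f x) = (#s : K) • (S + vecMulVec μ μ) := by
  rcases s.eq_empty_or_nonempty with rfl | hne
  · simp
  · rw [← inv_card_smul_sum_vecMulVec_self s f μ hμ S hS,
      smul_inv_smul₀ (by simpa using hne.ne_empty)]

end Matrix

theorem three_level_hierarchical_decomposition_general (C m p : ℕ)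
    (δ : Fin m → Fin C → Fin C → (Fin p → ℝ))
    (G : Matrix (Fin p) (Fin p) ℝ)
    (hG : G = ((C * m : ℝ))⁻¹ •
        ∑ c : Fin C, ∑ i : Fin m, ∑ c' : Fin C, Matrix.vecMulVec (δ i c c') (δ i c c'))
    (δbar : Fin C → Fin C → (Fin p → ℝ))
    (hδbar : ∀ c c', δbar c c' = (m : ℝ)⁻¹ • ∑ i : Fin m, δ i c c')
    (Sg : Fin C → Fin C → Matrix (Fin p) (Fin p) ℝ)
    (hSg : ∀ c c', Sg c c' = (m : ℝ)⁻¹ •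
        ∑ i : Fin m, Matrix.vecMulVec (δ i c c' - δbar c c') (δ i c c' - δbar c c'))
    (δctr : Fin C → (Fin p → ℝ))
    (hδctr : ∀ c, δctr c = ((C : ℝ) - 1)⁻¹ • ∑ c' ∈ Finset.univ.erase c, δbar c c')
    (Sc : Fin C → Matrix (Fin p) (Fin p) ℝ)
    (hSc : ∀ c, Sc c = ((C : ℝ) - 1)⁻¹ •
        ∑ c' ∈ Finset.univ.erase c,
          Matrix.vecMulVec (δbar c c' - δctr c) (δbar c c' - δctr c)) :
    G = (C : ℝ)⁻¹ • (∑ c : Fin C, Matrix.vecMulVec (δbar c c) (δbar c c))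
        + (((C : ℝ) - 1) / C) • (∑ c : Fin C, Matrix.vecMulVec (δctr c) (δctr c))
        + (((C : ℝ) - 1) / C) • (∑ c : Fin C, Sc c)
        + (C : ℝ)⁻¹ • ∑ c : Fin C, ∑ c' : Fin C, Sg c c' := by
  have hG_mean :
      G = (C : ℝ)⁻¹ • ∑ c, ∑ c', (m : ℝ)⁻¹ • ∑ i, vecMulVec (δ i c c') (δ i c c') := by
    rw [hG, mul_inv, mul_smul, smul_sum (s := univ)]
    congr! 2 with c
    rw [← smul_sum, sum_comm]
  have hgroup (c c' : Fin C) : (m : ℝ)⁻¹ • ∑ i, vecMulVec (δ i c c') (δ i c c')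
      = Sg c c' + vecMulVec (δbar c c') (δbar c c') := by
    simpa using inv_card_smul_sum_vecMulVec_self univ (fun i => δ i c c') _
      (by simpa using hδbar c c') _ (by simpa using hSg c c')
  have hcluster (c : Fin C) : ∑ c', vecMulVec (δbar c c') (δbar c c')
      = vecMulVec (δbar c c) (δbar c c)
        + ((C : ℝ) - 1) • (Sc c + vecMulVec (δctr c) (δctr c)) := by
    have hcard : (#(univ.erase c) : ℝ) = C - 1 := by
      simp [card_erase_of_mem, Nat.cast_sub (Fin.pos c)]
    rw [← add_sum_erase _ _ (mem_univ c), ← hcard]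
    congr 1
    exact sum_vecMulVec_self_eq_card_smul _ (fun c' => δbar c c') _
      (by rw [hcard]; exact hδctr c) _ (by rw [hcard]; exact hSc c)
  simp only [hG_mean, hgroup, sum_add_distrib, hcluster, smul_add, ← smul_sum]
  module

/-- Three-level hierarchical decomposition `G = G₀ + G₁ + G₂ + G₃` (Eq. 23 of the
paper) of the second moment matrix of the logit derivatives, where `G₀` is the Gram of
the diagonal means `δ_{c,c}`, `G₁` is the between-cluster term (Gram of the cluster
centers `δ_c`), `G₂` is the within-cluster term, and `G₃` is the within-group term. -/
theorem three_level_hierarchical_decomposition (C m p : ℕ) (hC : 2 ≤ C) (hm : 0 < m)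
    (hp : 0 < p)
    (δ : Fin m → Fin C → Fin C → (Fin p → ℝ))
    (G : Matrix (Fin p) (Fin p) ℝ)
    (hG : G = ((C * m : ℝ))⁻¹ •
        ∑ c : Fin C, ∑ i : Fin m, ∑ c' : Fin C, Matrix.vecMulVec (δ i c c') (δ i c c'))
    (δbar : Fin C → Fin C → (Fin p → ℝ))
    (hδbar : ∀ c c', δbar c c' = (m : ℝ)⁻¹ • ∑ i : Fin m, δ i c c')
    (Sg : Fin C → Fin C → Matrix (Fin p) (Fin p) ℝ)
    (hSg : ∀ c c', Sg c c' = (m : ℝ)⁻¹ •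
        ∑ i : Fin m, Matrix.vecMulVec (δ i c c' - δbar c c') (δ i c c' - δbar c c'))
    (δctr : Fin C → (Fin p → ℝ))
    (hδctr : ∀ c, δctr c = ((C : ℝ) - 1)⁻¹ • ∑ c' ∈ Finset.univ.erase c, δbar c c')
    (Sc : Fin C → Matrix (Fin p) (Fin p) ℝ)
    (hSc : ∀ c, Sc c = ((C : ℝ) - 1)⁻¹ •
        ∑ c' ∈ Finset.univ.erase c,
          Matrix.vecMulVec (δbar c c' - δctr c) (δbar c c' - δctr c)) :
    G = (C : ℝ)⁻¹ • (∑ c : Fin C, Matrix.vecMulVec (δbar c c) (δbar c c))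
        + (((C : ℝ) - 1) / C) • (∑ c : Fin C, Matrix.vecMulVec (δctr c) (δctr c))
        + (((C : ℝ) - 1) / C) • (∑ c : Fin C, Sc c)
        + (C : ℝ)⁻¹ • ∑ c : Fin C, ∑ c' : Fin C, Sg c c' :=
  three_level_hierarchical_decomposition_general C m p δ G hG δbar hδbar Sg hSg δctr hδctr Sc hSc
end
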